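/- Let m ≥ 2 be an even integer and n ≥ 1. Let g, h ∈ ℝ with h ≠ 0 and g/h not an integer, let A be the Cauchy–Hankel tensor of order m and dimension n determined by g and h, and define f(x) = A x^m for x ∈ ℝ^n. Then A is positive definite if and only if f is strictly monotonically increasing on ℝ^n_+, i.e., for all x, y ∈ ℝ^n with x ≥ y ≥ 0 componentwise and x ≠ y, one has f(x) > f(y). -/
import Mathlib


open Finset

/-- `A x^m = ∑_{i_1,…,i_m} a_{i_1⋯i_m} x_{i_1}⋯x_{i_m}` for an order `m` dimension `n` tensor. -/
noncomputable def tApply (m n : ℕ) (a : (Fin m → Fin n) → ℝ) (x : Fin n → ℝ) : ℝ :=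
  ∑ i : Fin m → Fin n, a i * ∏ j, x (i j)

/-- An (even order) tensor is positive semi-definite if `A x^m ≥ 0` for all `x`. -/
def IsPSD (m n : ℕ) (a : (Fin m → Fin n) → ℝ) : Prop :=
  ∀ x : Fin n → ℝ, 0 ≤ tApply m n a x

/-- An (even order) tensor is positive definite if `A x^m > 0` for all nonzero `x`. -/
def IsPD (m n : ℕ) (a : (Fin m → Fin n) → ℝ) : Prop :=
  ∀ x : Fin n → ℝ, x ≠ 0 → 0 < tApply m n a x

/-- The Cauchy–Hankel tensor determined by `g, h`: entries
`1 / (g + h(i_1 + ⋯ + i_m))` for 1-based indices `i_j ∈ [n]`. -/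
noncomputable def cauchyHankel (m n : ℕ) (g h : ℝ) : (Fin m → Fin n) → ℝ :=
  fun i => 1 / (g + h * ∑ j, (((i j : ℕ) : ℝ) + 1))




lemma tApply_zero (m n : ℕ) (hm : 1 ≤ m) (a : (Fin m → Fin n) → ℝ) :
    tApply m n a (0 : Fin n → ℝ) = 0 := by
  unfold tApply
  have hmne : m ≠ 0 := by omega
  simp [Finset.prod_const, hmne]

lemma tApply_single (m n : ℕ) (a : (Fin m → Fin n) → ℝ) (k : Fin n) :
    tApply m n a (fun t => if t = k then 1 else 0) = a (fun _ => k) := by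
  unfold tApply
  rw [Finset.sum_eq_single (fun _ => k)]
  · simp
  · intro i _ hi
    have : ∃ j, i j ≠ k := by
      by_contra hc
      push_neg at hc
      exact hi (funext hc)
    obtain ⟨j, hj⟩ := this
    rw [Finset.prod_eq_zero (Finset.mem_univ j) (by simp [hj]), mul_zero]
  · intro hc
    exact absurd (Finset.mem_univ _) hc

lemma ch_diag (m n : ℕ) (g h : ℝ) (k : Fin n) :
    cauchyHankel m n g h (fun _ => k) = 1 / (g + h * (m * (((k : ℕ) : ℝ) + 1))) := by
  unfold cauchyHankel
  rw [Finset.sum_const, Finset.card_univ, Fintype.card_fin, nsmul_eq_mul]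

lemma den_pos (m n : ℕ) (hm : 1 ≤ m) (hn : 1 ≤ n) (g h : ℝ) (hh : h ≠ 0)
    (h1 : 0 < g + h * ((m : ℝ) * 1)) (h2 : 0 < g + h * ((m : ℝ) * n)) :
    ∀ i : Fin m → Fin n, 0 < g + h * ∑ j, (((i j : ℕ) : ℝ) + 1) := by
  intro i
  have hl : (m : ℝ) * 1 ≤ ∑ j, (((i j : ℕ) : ℝ) + 1) := by
    calc (m : ℝ) * 1 = ∑ _j : Fin m, (1:ℝ) := by simp
    _ ≤ _ := Finset.sum_le_sum fun j _ => by
          have : (0:ℝ) ≤ ((i j : ℕ) : ℝ) := Nat.cast_nonneg _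
          linarith
  have hu : ∑ j, (((i j : ℕ) : ℝ) + 1) ≤ (m : ℝ) * n := by
    calc ∑ j, (((i j : ℕ) : ℝ) + 1) ≤ ∑ _j : Fin m, (n : ℝ) := by
          refine Finset.sum_le_sum fun j _ => ?_
          have : ((i j : ℕ) : ℝ) + 1 ≤ ((n : ℕ) : ℝ) := by
            have := (i j).isLt
            exact_mod_cast Nat.succ_le_of_lt this
          simpa using this
    _ = (m : ℝ) * n := by simp [mul_comm]
  rcases lt_or_gt_of_ne hh with hp | hp
  · nlinarith
  · nlinarith


lemma mono_of_pos (m n : ℕ) (hm : 1 ≤ m) (a : (Fin m → Fin n) → ℝ)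
    (hpos : ∀ i, 0 < a i) (x y : Fin n → ℝ) (hy : ∀ i, 0 ≤ y i)
    (hxy : ∀ i, y i ≤ x i) (hne : x ≠ y) :
    tApply m n a y < tApply m n a x := by
  obtain ⟨k, hk⟩ : ∃ k, y k < x k := by
    by_contra hc
    push_neg at hc
    exact hne (funext fun i => le_antisymm (hc i) (hxy i))
  unfold tApply
  refine Finset.sum_lt_sum (fun i _ => ?_) ⟨fun _ => k, Finset.mem_univ _, ?_⟩
  · refine mul_le_mul_of_nonneg_left ?_ (hpos i).le
    exact Finset.prod_le_prod (fun j _ => hy _) (fun j _ => hxy _)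
  · refine mul_lt_mul_of_pos_left ?_ (hpos _)
    simp only [Finset.prod_const, Finset.card_univ, Fintype.card_fin]
    exact pow_lt_pow_left₀ hk (hy k) (by omega)
open MeasureTheory intervalIntegral Set Filter Topology


set_option maxHeartbeats 1000000 in
lemma pd_of_pos (m n : ℕ) (hm : 2 ≤ m) (hme : Even m) (g h : ℝ) (hh : h ≠ 0)
    (hden : ∀ i : Fin m → Fin n, 0 < g + h * ∑ j, (((i j : ℕ) : ℝ) + 1))
    (x : Fin n → ℝ) (hx : x ≠ 0) :
    0 < tApply m n (cauchyHankel m n g h) x := by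
  set c : (Fin m → Fin n) → ℝ := fun i => ∏ j, x (i j) with hc
  set S : (Fin m → Fin n) → ℝ := fun i => ∑ j, (((i j : ℕ) : ℝ) + 1) with hS
  set e : (Fin m → Fin n) → ℝ := fun i => g + h * S i - 1 with he
  have hegt : ∀ i, -1 < e i := fun i => by have := hden i; simp only [he]; linarith
  set G : ℝ → ℝ := fun t => ∑ i : Fin m → Fin n, c i * t ^ (e i) with hG
  -- integrability
  have hGint : ∀ a b : ℝ, IntervalIntegrable G volume a b := by
    intro a b
    have hGeq : G = ∑ i : Fin m → Fin n, (fun t => c i * t ^ (e i)) := by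
      funext t
      rw [hG, Finset.sum_apply]
    rw [hGeq]
    exact IntervalIntegrable.sum _ fun i _ =>
      (intervalIntegral.intervalIntegrable_rpow' (hegt i)).const_mul (c i)
  -- value of the integral
  have hval : ∫ t in (0:ℝ)..1, G t = tApply m n (cauchyHankel m n g h) x := by
    simp only [hG]
    rw [intervalIntegral.integral_finset_sum (fun i _ =>
      (intervalIntegral.intervalIntegrable_rpow' (hegt i)).const_mul (c i))]
    unfold tApply cauchyHankel
    refine Finset.sum_congr rfl fun i _ => ?_
    rw [intervalIntegral.integral_const_mul,
      integral_rpow (Or.inl (hegt i))]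
    have h1 : e i + 1 = g + h * S i := by simp only [he]; ring
    have h2 : e i + 1 ≠ 0 := by rw [h1]; exact (hden i).ne'
    rw [Real.one_rpow, Real.zero_rpow h2, h1]
    simp only [hc, hS]
    ring
  -- P
  set P : ℝ → ℝ := fun t => ∑ k : Fin n, x k * t ^ (h * (((k : ℕ) : ℝ) + 1)) with hP
  -- G t = t^(g-1) * P t ^ m for t > 0
  have hGP : ∀ t : ℝ, 0 < t → G t = t ^ (g - 1) * P t ^ m := by
    intro t ht
    have hPm : P t ^ m = ∑ i : Fin m → Fin n, c i * t ^ (h * S i) := by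
      rw [hP]
      calc (∑ k : Fin n, x k * t ^ (h * (((k : ℕ) : ℝ) + 1))) ^ m
          = ∏ _j : Fin m, ∑ k : Fin n, x k * t ^ (h * (((k : ℕ) : ℝ) + 1)) := by
            rw [Finset.prod_const, Finset.card_univ, Fintype.card_fin]
        _ = ∑ i ∈ Fintype.piFinset (fun _ : Fin m => (Finset.univ : Finset (Fin n))),
              ∏ j : Fin m, x (i j) * t ^ (h * (((i j : ℕ) : ℝ) + 1)) :=
            Finset.prod_univ_sum _ _
        _ = ∑ i : Fin m → Fin n, c i * t ^ (h * S i) := by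
            rw [Fintype.piFinset_univ]
            refine Finset.sum_congr rfl fun i _ => ?_
            simp only [hc, hS]
            rw [Finset.prod_mul_distrib]
            congr 1
            rw [Finset.mul_sum, Real.rpow_sum_of_pos ht]
    rw [hPm, Finset.mul_sum]
    refine Finset.sum_congr rfl fun i _ => ?_
    rw [← mul_assoc, mul_comm (t ^ (g-1)) (c i), mul_assoc, ← Real.rpow_add ht]
    congr 2
    simp only [he]
    ring
  have hGnonneg : ∀ t : ℝ, 0 < t → 0 ≤ G t := by
    intro t ht
    rw [hGP t ht]
    exact mul_nonneg (Real.rpow_pos_of_pos ht _).le (hme.pow_nonneg _)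
  have hGposP : ∀ t : ℝ, 0 < t → P t ≠ 0 → 0 < G t := by
    intro t ht hPt
    rw [hGP t ht]
    exact mul_pos (Real.rpow_pos_of_pos ht _) (hme.pow_pos hPt)
  -- choose dominant index k0
  obtain ⟨k1, hk1⟩ : ∃ k, x k ≠ 0 := by
    by_contra hcon
    push_neg at hcon
    exact hx (funext hcon)
  have hKne : (Finset.univ.filter (fun k => x k ≠ 0)).Nonempty :=
    ⟨k1, by simp [hk1]⟩
  obtain ⟨k0, hk0ne, hk0dom⟩ :
      ∃ k0 : Fin n, x k0 ≠ 0 ∧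
        ∀ k : Fin n, x k ≠ 0 → k ≠ k0 → 0 < h * (((k : ℕ) : ℝ) - ((k0 : ℕ) : ℝ)) := by
    rcases lt_or_gt_of_ne hh with hneg | hpos
    · refine ⟨(Finset.univ.filter (fun k => x k ≠ 0)).max' hKne, ?_, ?_⟩
      · have := (Finset.univ.filter (fun k => x k ≠ 0)).max'_mem hKne
        simpa using this
      · intro k hk hkne
        have hle : k ≤ (Finset.univ.filter (fun k => x k ≠ 0)).max' hKne :=
          Finset.le_max' _ _ (by simp [hk])
        have hlt : (k : ℕ) < ((Finset.univ.filter (fun k => x k ≠ 0)).max' hKne : ℕ) :=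
          lt_of_le_of_ne hle (by simpa [Fin.ext_iff] using hkne)
        have : ((k : ℕ) : ℝ) < (((Finset.univ.filter (fun k => x k ≠ 0)).max' hKne : ℕ) : ℝ) := by
          exact_mod_cast hlt
        nlinarith
    · refine ⟨(Finset.univ.filter (fun k => x k ≠ 0)).min' hKne, ?_, ?_⟩
      · have := (Finset.univ.filter (fun k => x k ≠ 0)).min'_mem hKne
        simpa using this
      · intro k hk hkne
        have hle : (Finset.univ.filter (fun k => x k ≠ 0)).min' hKne ≤ k :=
          Finset.min'_le _ _ (by simp [hk])
        have hlt : (((Finset.univ.filter (fun k => x k ≠ 0)).min' hKne : ℕ)) < (k : ℕ) :=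
          lt_of_le_of_ne hle (by simpa [Fin.ext_iff, eq_comm] using hkne)
        have : ((((Finset.univ.filter (fun k => x k ≠ 0)).min' hKne : ℕ)) : ℝ) < ((k : ℕ) : ℝ) := by
          exact_mod_cast hlt
        nlinarith
  -- Q tends to x k0 at 0+
  set Q : ℝ → ℝ := fun t => ∑ k : Fin n, x k * t ^ (h * (((k : ℕ) : ℝ) - ((k0 : ℕ) : ℝ))) with hQ
  have hQtend : Tendsto Q (𝓝[>] (0:ℝ)) (𝓝 (x k0)) := by
    have hsum : Tendsto Q (𝓝[>] (0:ℝ))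
        (𝓝 (∑ k : Fin n, if k = k0 then x k0 else 0)) := by
      simp only [hQ]
      refine tendsto_finset_sum _ fun k _ => ?_
      by_cases hkk : k = k0
      · subst hkk
        simp only [if_pos rfl, sub_self, mul_zero, Real.rpow_zero, mul_one]
        exact tendsto_const_nhds
      · simp only [if_neg hkk]
        by_cases hxk : x k = 0
        · simpa [hxk] using (tendsto_const_nhds : Tendsto (fun _ : ℝ => (0:ℝ)) _ _)
        · have hepos : 0 < h * (((k : ℕ) : ℝ) - ((k0 : ℕ) : ℝ)) := hk0dom k hxk hkk
          have hcont : ContinuousAt (fun t : ℝ => t ^ (h * (((k : ℕ) : ℝ) - ((k0 : ℕ) : ℝ)))) 0 :=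
            Real.continuousAt_rpow_const 0 _ (Or.inr hepos.le)
          have h0 : (0:ℝ) ^ (h * (((k : ℕ) : ℝ) - ((k0 : ℕ) : ℝ))) = 0 :=
            Real.zero_rpow hepos.ne'
          have htt : Tendsto (fun t : ℝ => t ^ (h * (((k : ℕ) : ℝ) - ((k0 : ℕ) : ℝ))))
              (𝓝[>] (0:ℝ)) (𝓝 0) := by
            have h2 := hcont.tendsto
            rw [h0] at h2
            exact h2.mono_left nhdsWithin_le_nhds
          have h3 := htt.const_mul (x k)
          rw [mul_zero] at h3
          exact h3
    simpa using hsum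
  -- find c₀ ∈ (0,1) with P c₀ ≠ 0
  have hev : ∀ᶠ t in 𝓝[>] (0:ℝ), Q t ≠ 0 ∧ t ∈ Ioo (0:ℝ) 1 :=
    (hQtend.eventually_ne hk0ne).and
      (Filter.eventually_of_mem (Ioo_mem_nhdsGT_of_mem ⟨le_refl 0, one_pos⟩) fun t ht => ht)
  obtain ⟨c₀, hQc₀, hc₀⟩ := hev.exists
  have hc₀pos : 0 < c₀ := hc₀.1
  have hPc₀ : P c₀ ≠ 0 := by
    have hfac : P c₀ = c₀ ^ (h * (((k0 : ℕ) : ℝ) + 1)) * Q c₀ := by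
      simp only [hP, hQ, Finset.mul_sum]
      refine Finset.sum_congr rfl fun k _ => ?_
      rw [← mul_assoc, mul_comm (c₀ ^ (h * (((k0 : ℕ) : ℝ) + 1))) (x k), mul_assoc,
        ← Real.rpow_add hc₀pos]
      congr 2
      ring
    rw [hfac]
    exact mul_ne_zero (Real.rpow_pos_of_pos hc₀pos _).ne' hQc₀
  -- continuity of P at c₀ and a good interval
  have hPcont : Tendsto P (𝓝 c₀) (𝓝 (P c₀)) := by
    have : Tendsto (fun t : ℝ => ∑ k : Fin n, x k * t ^ (h * (((k : ℕ) : ℝ) + 1)))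
        (𝓝 c₀) (𝓝 (∑ k : Fin n, x k * c₀ ^ (h * (((k : ℕ) : ℝ) + 1)))) := by
      refine tendsto_finset_sum _ fun k _ => ?_
      exact ((Real.continuousAt_rpow_const c₀ _ (Or.inl hc₀pos.ne')).const_mul (x k))
    simpa [hP] using this
  have hev2 : ∀ᶠ t in 𝓝 c₀, P t ≠ 0 ∧ t ∈ Ioo (0:ℝ) 1 :=
    (hPcont.eventually_ne hPc₀).and
      (Filter.eventually_of_mem (isOpen_Ioo.mem_nhds hc₀) fun t ht => ht)
  obtain ⟨ε, hεpos, hε⟩ := Metric.eventually_nhds_iff.mp hev2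
  set δ : ℝ := min (ε / 2) (c₀ / 2) with hδ
  have hδpos : 0 < δ := lt_min (by linarith) (by linarith)
  have hδε : δ < ε := lt_of_le_of_lt (min_le_left _ _) (by linarith)
  set a : ℝ := c₀ - δ with ha
  set b : ℝ := c₀ + δ with hb
  have hab : a < b := by simp only [ha, hb]; linarith
  have hkey : ∀ t : ℝ, t ∈ Set.Icc a b → P t ≠ 0 ∧ t ∈ Ioo (0:ℝ) 1 := by
    intro t ht
    apply hε
    rw [Real.dist_eq, abs_lt]
    constructor
    · have := ht.1; simp only [ha] at this; linarith
    · have := ht.2; simp only [hb] at this; linarith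
  have hapos : 0 < a := by
    have := (hkey a ⟨le_refl a, hab.le⟩).2.1
    exact this
  have hblt : b < 1 := (hkey b ⟨hab.le, le_refl b⟩).2.2
  have h0a : (0:ℝ) ≤ a := hapos.le
  -- split the integral
  have hsub1 : Set.uIcc (0:ℝ) a ⊆ Set.uIcc (0:ℝ) 1 := by
    rw [Set.uIcc_of_le h0a, Set.uIcc_of_le zero_le_one]
    exact Set.Icc_subset_Icc (le_refl 0) (by linarith)
  have hsub2 : Set.uIcc a b ⊆ Set.uIcc (0:ℝ) 1 := by
    rw [Set.uIcc_of_le hab.le, Set.uIcc_of_le zero_le_one]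
    exact Set.Icc_subset_Icc h0a hblt.le
  have hsub3 : Set.uIcc b (1:ℝ) ⊆ Set.uIcc (0:ℝ) 1 := by
    rw [Set.uIcc_of_le hblt.le, Set.uIcc_of_le zero_le_one]
    exact Set.Icc_subset_Icc (by linarith) (le_refl 1)
  have hi1 := (hGint 0 1).mono_set hsub1
  have hi2 := (hGint 0 1).mono_set hsub2
  have hi3 := (hGint 0 1).mono_set hsub3
  have hsplit : ∫ t in (0:ℝ)..1, G t
      = (∫ t in (0:ℝ)..a, G t) + (∫ t in a..b, G t) + (∫ t in b..(1:ℝ), G t) := by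
    rw [integral_add_adjacent_intervals hi1 hi2,
      integral_add_adjacent_intervals ((hi1.trans hi2)) hi3]
  -- nonnegativity of the two side pieces
  have hn1 : 0 ≤ ∫ t in (0:ℝ)..a, G t := by
    refine integral_nonneg_of_ae_restrict h0a ?_
    have hmem : ∀ᵐ t ∂(volume.restrict (Set.Icc (0:ℝ) a)), t ∈ Set.Icc (0:ℝ) a :=
      ae_restrict_mem measurableSet_Icc
    have hne0 : ∀ᵐ t ∂(volume.restrict (Set.Icc (0:ℝ) a)), t ≠ 0 := by
      refine ae_restrict_of_ae ?_
      have : (volume : Measure ℝ) {(0:ℝ)} = 0 := Real.volume_singleton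
      exact measure_mono_null (fun t ht => by simpa using ht) this
    filter_upwards [hmem, hne0] with t htmem htne
    exact hGnonneg t (lt_of_le_of_ne htmem.1 (Ne.symm htne))
  have hn3 : 0 ≤ ∫ t in b..(1:ℝ), G t := by
    refine integral_nonneg hblt.le fun t ht => ?_
    exact hGnonneg t (lt_of_lt_of_le (lt_of_lt_of_le hapos (by linarith)) ht.1)
  have hn2 : 0 < ∫ t in a..b, G t := by
    refine intervalIntegral_pos_of_pos_on hi2 (fun t ht => ?_) hab
    have h1 := hkey t ⟨ht.1.le, ht.2.le⟩
    exact hGposP t h1.2.1 h1.1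
  rw [← hval, hsplit]
  linarith


/-- Theorem 5.2: an even order Cauchy–Hankel tensor is positive definite iff
`f(x) = A x^m` is strictly monotonically increasing on the nonnegative orthant. -/
theorem stmt_16 (m n : ℕ) (hm : 2 ≤ m) (hme : Even m) (hn : 1 ≤ n)
    (g h : ℝ) (hh : h ≠ 0) (hgh : ∀ z : ℤ, g / h ≠ (z : ℝ)) :
    IsPD m n (cauchyHankel m n g h)
      ↔ ∀ x y : Fin n → ℝ, (∀ i, 0 ≤ y i) → (∀ i, y i ≤ x i) → x ≠ y →
          tApply m n (cauchyHankel m n g h) y < tApply m n (cauchyHankel m n g h) x := by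
  have hm1 : 1 ≤ m := by omega
  -- basis vectors
  have hsingle_ne : ∀ k : Fin n, (fun t : Fin n => if t = k then (1:ℝ) else 0) ≠ 0 := by
    intro k hcon
    have := congrFun hcon k
    simp at this
  have hdiag_val : ∀ k : Fin n,
      tApply m n (cauchyHankel m n g h) (fun t => if t = k then 1 else 0)
        = 1 / (g + h * ((m : ℝ) * (((k : ℕ) : ℝ) + 1))) := by
    intro k
    rw [tApply_single, ch_diag]
  have hlast : ((⟨n - 1, by omega⟩ : Fin n) : ℕ) = n - 1 := rfl
  have hcast : (((⟨n - 1, by omega⟩ : Fin n) : ℕ) : ℝ) + 1 = (n : ℝ) := by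
    rw [hlast]
    have : ((n - 1 : ℕ) : ℝ) = (n : ℝ) - 1 := by
      have : (1:ℕ) ≤ n := hn
      push_cast [Nat.cast_sub this]
      ring
    rw [this]; ring
  constructor
  · intro hPD x y hy hxy hne
    have hden : ∀ i : Fin m → Fin n, 0 < g + h * ∑ j, (((i j : ℕ) : ℝ) + 1) := by
      refine den_pos m n hm1 hn g h hh ?_ ?_
      · have h0 := hPD _ (hsingle_ne ⟨0, by omega⟩)
        rw [hdiag_val] at h0
        have := (one_div_pos.mp h0)
        simpa using this
      · have h0 := hPD _ (hsingle_ne ⟨n - 1, by omega⟩)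
        rw [hdiag_val] at h0
        have h1 := (one_div_pos.mp h0)
        rwa [hcast] at h1
    refine mono_of_pos m n hm1 _ (fun i => ?_) x y hy hxy hne
    unfold cauchyHankel
    exact one_div_pos.mpr (hden i)
  · intro hmono
    have hz : tApply m n (cauchyHankel m n g h) (0 : Fin n → ℝ) = 0 :=
      tApply_zero m n hm1 _
    have hdiagpos : ∀ k : Fin n,
        0 < 1 / (g + h * ((m : ℝ) * (((k : ℕ) : ℝ) + 1))) := by
      intro k
      have := hmono (fun t => if t = k then 1 else 0) 0 (fun i => le_refl 0)
        (fun i => by dsimp; split <;> norm_num) (hsingle_ne k)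
      rw [hz, hdiag_val] at this
      exact this
    have hden : ∀ i : Fin m → Fin n, 0 < g + h * ∑ j, (((i j : ℕ) : ℝ) + 1) := by
      refine den_pos m n hm1 hn g h hh ?_ ?_
      · have h0 := hdiagpos ⟨0, by omega⟩
        have := (one_div_pos.mp h0)
        simpa using this
      · have h0 := hdiagpos ⟨n - 1, by omega⟩
        have h1 := (one_div_pos.mp h0)
        rwa [hcast] at h1
    intro x hx
    exact pd_of_pos m n hm hme g h hh hden x hx
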